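/- arXiv:1704.06974 — 3 statements merged into one kernel-verified Lean document; each statement's English description precedes it below -/
import Mathlib

section
/- Let P be a symmetric real N×N matrix and b a real N×m matrix. For all integers k, l ≥ 0, (T_k(P) b)ᵀ · P · (T_l(P) b) = (1/4) · ( bᵀ T_{k+l+1}(P) b + bᵀ T_{|k−l+1|}(P) b + bᵀ T_{|k+l−1|}(P) b + bᵀ T_{|k−l−1|}(P) b ). -/
open Matrix Polynomial

/-!
Since `X = T_1`, two applications of the product formula `2 T_m T_n = T_{m+n} + T_{m-n}` expand
`4 T_k X T_l` into four Chebyshev polynomials, and `T_{-n} = T_n` removes the signs. Evaluating at `P`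
gives the middle factor `T_k(P) P T_l(P)`; symmetry of `P` makes `T_k(P)ᵀ = T_k(P)`.
-/

/-- Evaluation of the Chebyshev polynomial of the first kind at a square matrix. -/
noncomputable def chebMat {I : Type*} [Fintype I] [DecidableEq I]
    (P : Matrix I I ℝ) (k : ℤ) : Matrix I I ℝ :=
  Polynomial.aeval P (Polynomial.Chebyshev.T ℝ k)

namespace Polynomial.Chebyshev

theorem four_mul_T_mul_X_mul_T (R : Type*) [CommRing R] (k l : ℤ) :
    4 * (T R k * X * T R l) =
      T R (k + l + 1) + T R (k - l + 1) + T R (k + l - 1) + T R (k - l - 1) := by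
  have hkl := T_mul_T R k l
  have hsum := T_mul_T R (k + l) 1
  have hdiff := T_mul_T R (k - l) 1
  rw [T_one] at hsum hdiff
  linear_combination 2 * X * hkl + hsum + hdiff

theorem aeval_T_mul_mul_aeval_T {K A : Type*} [Field K] [CharZero K] [Ring A] [Algebra K A]
    (a : A) (k l : ℤ) :
    aeval a (T K k) * a * aeval a (T K l) =
      (1 / 4 : K) • (aeval a (T K (k + l + 1)) + aeval a (T K (k - l + 1))
        + aeval a (T K (k + l - 1)) + aeval a (T K (k - l - 1))) := by
  have h := congrArg (aeval a) (four_mul_T_mul_X_mul_T K k l)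
  simp only [map_mul, map_add, map_ofNat, aeval_X] at h
  rw [← h, Algebra.smul_def, ← mul_assoc, ← map_ofNat (algebraMap K A) 4, ← map_mul]
  norm_num

end Polynomial.Chebyshev

theorem Matrix.IsSymm.aeval {R n : Type*} [CommSemiring R] [Fintype n] [DecidableEq n]
    {A : Matrix n n R} (hA : A.IsSymm) (p : R[X]) : (aeval A p).IsSymm := by
  induction p using Polynomial.induction_on' with
  | add p q hp hq => simpa only [map_add] using hp.add hq
  | monomial k a =>
    rw [aeval_monomial, Algebra.algebraMap_eq_smul_one, smul_one_mul]
    exact (hA.pow k).smul a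

theorem chebMat_abs {I : Type*} [Fintype I] [DecidableEq I] (P : Matrix I I ℝ) (k : ℤ) :
    chebMat P |k| = chebMat P k := by
  rw [chebMat, chebMat, ← Int.natCast_natAbs, Polynomial.Chebyshev.T_natAbs]

theorem stmt5 (N m : ℕ) (P : Matrix (Fin N) (Fin N) ℝ) (hP : P.IsSymm)
    (b : Matrix (Fin N) (Fin m) ℝ) (k l : ℕ) :
    (chebMat P k * b)ᵀ * P * (chebMat P l * b) =
      (1 / 4 : ℝ) • (bᵀ * chebMat P (k + l + 1) * b
        + bᵀ * chebMat P |(k : ℤ) - l + 1| * b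
        + bᵀ * chebMat P |(k : ℤ) + l - 1| * b
        + bᵀ * chebMat P |(k : ℤ) - l - 1| * b) := by
  have hsymm : (chebMat P k)ᵀ = chebMat P k := (hP.aeval _).eq
  have hmiddle : chebMat P k * P * chebMat P l =
      (1 / 4 : ℝ) • (chebMat P (k + l + 1) + chebMat P ((k : ℤ) - l + 1)
        + chebMat P ((k : ℤ) + l - 1) + chebMat P ((k : ℤ) - l - 1)) :=
    Polynomial.Chebyshev.aeval_T_mul_mul_aeval_T P k l
  calc (chebMat P k * b)ᵀ * P * (chebMat P l * b)
      = bᵀ * (chebMat P k * P * chebMat P l) * b := by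
        simp only [transpose_mul, hsymm, Matrix.mul_assoc]
    _ = _ := by
        rw [chebMat_abs, chebMat_abs, chebMat_abs, hmiddle]
        simp only [Matrix.mul_smul, Matrix.smul_mul, Matrix.mul_add, Matrix.add_mul]
end

section
/- Let P be a symmetric real N×N matrix and b a real N×m matrix, and write D^k = bᵀ T_k(P) b. Then for all integers n ≥ 1 and l ≥ 0, D^{n−1+l} = 2 · (T_{n−1}(P) b)ᵀ (T_l(P) b) − D^{|n−1−l|}. -/
open Matrix Polynomial

theorem Matrix.aeval_transpose {n R : Type*} [Fintype n] [DecidableEq n] [CommSemiring R]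
    (P : Matrix n n R) (p : R[X]) : aeval Pᵀ p = (aeval P p)ᵀ := by
  simp only [aeval_eq_sum_range, transpose_sum, transpose_smul, transpose_pow]

section
variable {I : Type*} [Fintype I] [DecidableEq I] (P : Matrix I I ℝ)

theorem chebMat_transpose (k : ℤ) : (chebMat P k)ᵀ = chebMat Pᵀ k :=
  (aeval_transpose P _).symm

theorem chebMat_abs_s15 (k : ℤ) : chebMat P |k| = chebMat P k := by
  rcases abs_choice k with h | h <;> simp only [chebMat, h, Chebyshev.T_neg]

theorem chebMat_add (a c : ℤ) :
    chebMat P (a + c) = (2 : ℝ) • (chebMat P a * chebMat P c) - chebMat P (a - c) := by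
  have h := congrArg (aeval P) (Chebyshev.T_mul_T ℝ a c)
  simp only [map_add, map_mul, map_ofNat] at h
  unfold chebMat
  rw [eq_sub_iff_add_eq, ← h, two_smul, ← two_mul, mul_assoc]
end

theorem stmt15_general (N m : ℕ) (P : Matrix (Fin N) (Fin N) ℝ) (hP : P.IsSymm)
    (b : Matrix (Fin N) (Fin m) ℝ) (n : ℕ) (l : ℕ) :
    bᵀ * chebMat P (n - 1 + l) * b =
      (2 : ℝ) • ((chebMat P (n - 1) * b)ᵀ * (chebMat P l * b)) -
        bᵀ * chebMat P |(n : ℤ) - 1 - l| * b := by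
  rw [chebMat_abs_s15, chebMat_add, transpose_mul, chebMat_transpose, hP.eq]
  simp only [Matrix.sub_mul, Matrix.mul_sub, Matrix.smul_mul, Matrix.mul_smul, Matrix.mul_assoc]

theorem stmt15 (N m : ℕ) (P : Matrix (Fin N) (Fin N) ℝ) (hP : P.IsSymm)
    (b : Matrix (Fin N) (Fin m) ℝ) (n : ℕ) (hn : 1 ≤ n) (l : ℕ) :
    bᵀ * chebMat P (n - 1 + l) * b =
      (2 : ℝ) • ((chebMat P (n - 1) * b)ᵀ * (chebMat P l * b)) -
        bᵀ * chebMat P |(n : ℤ) - 1 - l| * b :=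
  stmt15_general N m P hP b n l
end

section
/- Let P be a symmetric real N×N matrix and b a real N×m matrix, and write D^k = bᵀ T_k(P) b and û^k = T_k(P) b. Then for every integer n ≥ 2, D^{2n−1} = 4 · (û^{n−1})ᵀ P (û^{n−1}) − 2 · (û^{n−1})ᵀ û^{n−2} − D^1. -/
open Matrix Polynomial

/- The product formula `2 T_m T_k = T_{m+k} + T_{m-k}` at `m = k - 1`, with `T_k` expanded by the
three-term recurrence, expresses `T_{2k-1}` through `T_{k-1}` and `T_{k-2}` only. -/
theorem Polynomial.Chebyshev.T_two_mul_sub_one (R : Type*) [CommRing R] (k : ℤ) :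
    Chebyshev.T R (2 * k - 1) =
      4 * X * Chebyshev.T R (k - 1) ^ 2 - 2 * Chebyshev.T R (k - 1) * Chebyshev.T R (k - 2) -
        Chebyshev.T R 1 := by
  have hprod := Chebyshev.T_mul_T R (k - 1) k
  have hrec := Chebyshev.T_sub_two R k
  rw [show k - 1 + k = 2 * k - 1 by ring, show k - 1 - k = -1 by ring, Chebyshev.T_neg] at hprod
  linear_combination -hprod + 2 * Chebyshev.T R (k - 1) * hrec

theorem Matrix.transpose_aeval {I α : Type*} [Fintype I] [DecidableEq I] [CommSemiring α]
    (P : Matrix I I α) (p : α[X]) : (aeval P p)ᵀ = aeval Pᵀ p := by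
  apply MulOpposite.op_injective
  rw [← aeval_op_apply]
  exact (aeval_algHom_apply (transposeAlgEquiv (R := α) (m := I) (α := α)) P p).symm

section chebMat

variable {I : Type*} [Fintype I] [DecidableEq I]

theorem isSymm_chebMat {P : Matrix I I ℝ} (hP : P.IsSymm) (k : ℤ) : (chebMat P k).IsSymm := by
  rw [Matrix.IsSymm, chebMat, transpose_aeval, hP.eq]

theorem commute_chebMat_self (P : Matrix I I ℝ) (k : ℤ) : Commute (chebMat P k) P := by
  simpa [chebMat] using (commute_X (Chebyshev.T ℝ k)).symm.map (aeval P)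

theorem chebMat_two_mul_sub_one (P : Matrix I I ℝ) (k : ℤ) :
    chebMat P (2 * k - 1) =
      (4 : ℝ) • (chebMat P (k - 1) * P * chebMat P (k - 1)) -
        (2 : ℝ) • (chebMat P (k - 1) * chebMat P (k - 2)) - chebMat P 1 := by
  have hcomm := (commute_chebMat_self P (k - 1)).eq
  unfold chebMat at hcomm ⊢
  simp only [Chebyshev.T_two_mul_sub_one, map_sub, map_mul, map_ofNat, aeval_X, sq,
    Algebra.smul_def]
  rw [mul_assoc, hcomm]
  noncomm_ring

end chebMat

theorem stmt16_general (N m : ℕ) (P : Matrix (Fin N) (Fin N) ℝ) (hP : P.IsSymm)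
    (b : Matrix (Fin N) (Fin m) ℝ) (n : ℕ) :
    bᵀ * chebMat P (2 * n - 1) * b =
      (4 : ℝ) • ((chebMat P (n - 1) * b)ᵀ * P * (chebMat P (n - 1) * b)) -
      (2 : ℝ) • ((chebMat P (n - 1) * b)ᵀ * (chebMat P (n - 2) * b)) -
      bᵀ * chebMat P 1 * b := by
  rw [chebMat_two_mul_sub_one, transpose_mul, (isSymm_chebMat hP _).eq]
  simp only [Matrix.sub_mul, Matrix.mul_sub, Matrix.smul_mul, Matrix.mul_smul, Matrix.mul_assoc]

theorem stmt16 (N m : ℕ) (P : Matrix (Fin N) (Fin N) ℝ) (hP : P.IsSymm)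
    (b : Matrix (Fin N) (Fin m) ℝ) (n : ℕ) (hn : 2 ≤ n) :
    bᵀ * chebMat P (2 * n - 1) * b =
      (4 : ℝ) • ((chebMat P (n - 1) * b)ᵀ * P * (chebMat P (n - 1) * b)) -
      (2 : ℝ) • ((chebMat P (n - 1) * b)ᵀ * (chebMat P (n - 2) * b)) -
      bᵀ * chebMat P 1 * b :=
  stmt16_general N m P hP b n
end
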